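/- One-point crossover disruption lemma. Let H : Fin ℓ → Option Bool be a schema with at least one fixed position, let a be its smallest fixed position and c its largest fixed position. Let A, B : Fin ℓ → Bool with A matching H, and let k ∈ {1,…,ℓ−1} be a cut point. Define the two offspring A' and B' by A' i = A i for i < k and A' i = B i for i ≥ k, and B' i = B i for i < k and B' i = A i for i ≥ k. If k > c then A' matches H, and if k ≤ a then B' matches H. Consequently, whenever the cut point k lies outside the set {a+1,…,c} of d(H) = c − a disruptive positions, at least one of the two offspring matches H. -/

import Mathlib

/-- A bit string `A : Fin ℓ → Bool` matches (is an instance of) a schema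
`H : Fin ℓ → Option Bool` if it agrees with `H` on every fixed position. -/
def SchemaMatches {ℓ : ℕ} (A : Fin ℓ → Bool) (H : Fin ℓ → Option Bool) : Prop :=
  ∀ i : Fin ℓ, ∀ b : Bool, H i = some b → A i = b

instance {ℓ : ℕ} (A : Fin ℓ → Bool) (H : Fin ℓ → Option Bool) :
    Decidable (SchemaMatches A H) :=
  inferInstanceAs (Decidable (∀ i : Fin ℓ, ∀ b : Bool, H i = some b → A i = b))

/-- The fixed positions of a schema: indices where `H` is not `∗`. -/
def fixedPos {ℓ : ℕ} (H : Fin ℓ → Option Bool) : Finset (Fin ℓ) :=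
  Finset.univ.filter (fun i => H i ≠ none)

/-- The order `o(H)`: the number of fixed positions. -/
def schemaOrder {ℓ : ℕ} (H : Fin ℓ → Option Bool) : ℕ := (fixedPos H).card

/-- The defining length `d(H)`: distance between the last and first fixed positions. -/
def defLength {ℓ : ℕ} (H : Fin ℓ → Option Bool) (h : (fixedPos H).Nonempty) : ℕ :=
  ((fixedPos H).max' h : ℕ) - ((fixedPos H).min' h : ℕ)

theorem mem_fixedPos_of_eq_some {ℓ : ℕ} {H : Fin ℓ → Option Bool} {i : Fin ℓ} {b : Bool}
    (h : H i = some b) : i ∈ fixedPos H := by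
  simp [fixedPos, h]

theorem SchemaMatches.of_eqOn_fixedPos {ℓ : ℕ} {H : Fin ℓ → Option Bool} {A A' : Fin ℓ → Bool}
    (hA : SchemaMatches A H) (hAA' : Set.EqOn A' A (fixedPos H)) : SchemaMatches A' H :=
  fun i b hb => (hAA' (mem_fixedPos_of_eq_some hb)).trans (hA i b hb)

def crossover {ℓ : ℕ} (A B : Fin ℓ → Bool) (k : ℕ) : Fin ℓ → Bool :=
  fun i => if (i : ℕ) < k then A i else B i

theorem SchemaMatches.crossover_left {ℓ : ℕ} {H : Fin ℓ → Option Bool}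
    (hfix : (fixedPos H).Nonempty) {A : Fin ℓ → Bool} (hA : SchemaMatches A H)
    (B : Fin ℓ → Bool) {k : ℕ} (hk : ((fixedPos H).max' hfix : ℕ) < k) :
    SchemaMatches (crossover A B k) H :=
  hA.of_eqOn_fixedPos fun i hi =>
    if_pos ((Fin.le_iff_val_le_val.mp ((fixedPos H).le_max' i hi)).trans_lt hk)

theorem SchemaMatches.crossover_right {ℓ : ℕ} {H : Fin ℓ → Option Bool}
    (hfix : (fixedPos H).Nonempty) {A : Fin ℓ → Bool} (hA : SchemaMatches A H)
    (B : Fin ℓ → Bool) {k : ℕ} (hk : k ≤ ((fixedPos H).min' hfix : ℕ)) :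
    SchemaMatches (crossover B A k) H :=
  hA.of_eqOn_fixedPos fun i hi =>
    if_neg (hk.trans (Fin.le_iff_val_le_val.mp ((fixedPos H).min'_le i hi))).not_gt

theorem one_point_crossover_disruption_general {ℓ : ℕ} (H : Fin ℓ → Option Bool)
    (hfix : (fixedPos H).Nonempty) (A B : Fin ℓ → Bool) (hA : SchemaMatches A H)
    (k : ℕ) :
    ((((fixedPos H).max' hfix : ℕ) < k) →
        SchemaMatches (fun i : Fin ℓ => if (i : ℕ) < k then A i else B i) H) ∧
    ((k ≤ ((fixedPos H).min' hfix : ℕ)) →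
        SchemaMatches (fun i : Fin ℓ => if (i : ℕ) < k then B i else A i) H) ∧
    ((k ∉ Finset.Icc (((fixedPos H).min' hfix : ℕ) + 1) ((fixedPos H).max' hfix : ℕ)) →
        SchemaMatches (fun i : Fin ℓ => if (i : ℕ) < k then A i else B i) H ∨
          SchemaMatches (fun i : Fin ℓ => if (i : ℕ) < k then B i else A i) H) := by
  refine ⟨hA.crossover_left hfix B, hA.crossover_right hfix B, fun hk => ?_⟩
  rw [Finset.mem_Icc, not_and_or, not_le, not_le, Nat.lt_succ_iff] at hk
  exact hk.symm.imp (hA.crossover_left hfix B) (hA.crossover_right hfix B)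

/-- **One-point crossover disruption lemma.** Let `H` be a schema with at least one
fixed position, `a` its smallest and `c` its largest fixed position, let `A` match `H`,
and let `k ∈ {1,…,ℓ−1}` be a cut point. Let `A'` take positions `< k` from `A` and `≥ k`
from `B`, and let `B'` take positions `< k` from `B` and `≥ k` from `A`. If `k > c` then
`A'` matches `H`; if `k ≤ a` then `B'` matches `H`; consequently, whenever `k` lies
outside the set `{a+1,…,c}` of `d(H) = c − a` disruptive positions, at least one of the
two offspring matches `H`. -/
theorem one_point_crossover_disruption {ℓ : ℕ} (H : Fin ℓ → Option Bool)
    (hfix : (fixedPos H).Nonempty) (A B : Fin ℓ → Bool) (hA : SchemaMatches A H)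
    (k : ℕ) (hk1 : 1 ≤ k) (hk2 : k ≤ ℓ - 1) :
    ((((fixedPos H).max' hfix : ℕ) < k) →
        SchemaMatches (fun i : Fin ℓ => if (i : ℕ) < k then A i else B i) H) ∧
    ((k ≤ ((fixedPos H).min' hfix : ℕ)) →
        SchemaMatches (fun i : Fin ℓ => if (i : ℕ) < k then B i else A i) H) ∧
    ((k ∉ Finset.Icc (((fixedPos H).min' hfix : ℕ) + 1) ((fixedPos H).max' hfix : ℕ)) →
        SchemaMatches (fun i : Fin ℓ => if (i : ℕ) < k then A i else B i) H ∨
          SchemaMatches (fun i : Fin ℓ => if (i : ℕ) < k then B i else A i) H) :=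
  one_point_crossover_disruption_general H hfix A B hA k
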